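/- Completeness of C_nᴰ with respect to swap Kripke models: let n ≥ 2; for every set of formulas Γ ∪ {φ} ⊆ For(Σ₁ᴰ), if Γ ⊨_{C_nᴰ} φ then Γ ⊢_{C_nᴰ} φ. -/

import Mathlib

/-- Formulas over the signature Σ₁ᴰ = {∧, ∨, →, ¬, O}, with countably many
propositional variables. -/
inductive Form : Type
  | var : ℕ → Form
  | and : Form → Form → Form
  | or : Form → Form → Form
  | imp : Form → Form → Form
  | neg : Form → Form
  | obl : Form → Form

namespace Form

/-- α⁰ = α, α^{k+1} = ¬(α^k ∧ ¬α^k). -/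
def pow (α : Form) : ℕ → Form
  | 0 => α
  | k + 1 => ((α.pow k).and (α.pow k).neg).neg

/-- α^{(n)} = α¹ ∧ … ∧ αⁿ (for n ≥ 1). -/
def bigPow (α : Form) : ℕ → Form
  | 0 => α.pow 1
  | 1 => α.pow 1
  | m + 2 => (α.bigPow (m + 1)).and (α.pow (m + 2))

/-- ∼^{(n)}α := ¬α ∧ α^{(n)}. -/
def snn (n : ℕ) (α : Form) : Form := α.neg.and (α.bigPow n)

end Form

/-- The n+2 snapshots of the swap structure for C_nᴰ: T_n, t^n_0, …, t^n_{n-1}, F_n. -/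
inductive SVn (n : ℕ) : Type
  | T : SVn n
  | t : Fin n → SVn n
  | F : SVn n
deriving DecidableEq

namespace SVn

/-- The coordinates of a snapshot, as an element of 2^{n+1} (0-indexed):
T_n = (1,0,1,…,1), t^n_i has its unique 0 at (0-indexed) position i+2
(so t^n_{n-1} = (1,…,1)), and F_n = (0,1,…,1). -/
def coord {n : ℕ} : SVn n → Fin (n + 1) → Bool
  | .T, j => decide (j.val ≠ 1)
  | .t i, j => decide (j.val ≠ i.val + 2)
  | .F, j => decide (j.val ≠ 0)

/-- First coordinate z₁. -/
def p1 {n : ℕ} (z : SVn n) : Bool := z.coord 0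

/-- Second coordinate z₂. -/
def p2 {n : ℕ} (z : SVn n) : Bool := z.coord 1

/-- Designated values D_n = A_n ∖ {F_n}, i.e. first coordinate 1. -/
def desig {n : ℕ} (z : SVn n) : Prop := z.p1 = true

/-- Boolean values Boo_n = {T_n, F_n}. -/
def boo {n : ℕ} (z : SVn n) : Prop := z = SVn.T ∨ z = SVn.F

/-- Inconsistent values I_n = A_n ∖ Boo_n. -/
def incons {n : ℕ} (z : SVn n) : Prop := ∃ i : Fin n, z = SVn.t i

end SVn

/-- Boolean implication a ⊃ b. -/
def boolImp (a b : Bool) : Bool := !a || b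

/-- Membership of c in a #̃ b for a binary connective # with Boolean counterpart
`op`: c₁ = a₁ op b₁, and moreover c ∈ Boo_n whenever a, b ∈ Boo_n. -/
def opCond {n : ℕ} (op : Bool → Bool → Bool) (c a b : SVn n) : Prop :=
  c.p1 = op a.p1 b.p1 ∧ (a.boo → b.boo → c.boo)

/-- Swap Kripke pre-model conditions for C_nᴰ on a serial frame (W,R) with
valuations v_w : Form → A_n. -/
structure IsPreModelCnD (n : ℕ) {W : Type} (R : W → W → Prop)
    (v : W → Form → SVn n) : Prop where
  serial : ∀ w, ∃ w', R w w'
  and_ : ∀ w α β, opCond (· && ·) (v w (α.and β)) (v w α) (v w β)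
  or_ : ∀ w α β, opCond (· || ·) (v w (α.or β)) (v w α) (v w β)
  imp_ : ∀ w α β, opCond boolImp (v w (α.imp β)) (v w α) (v w β)
  neg_ : ∀ w α, (v w α.neg).p1 = (v w α).p2 ∧ (v w α.neg).p2 ≤ (v w α).p1
  obl_ : ∀ w α, ((v w α.obl).p1 = true ↔ ∀ w', R w w' → (v w' α).p1 = true)

/-- The RNmatrix restrictions on valuations:
(i) v_w(α) = t^n_0 implies v_w(α ∧ ¬α) = T_n;
(ii) for 1 ≤ k ≤ n−1, v_w(α) = t^n_k implies v_w(α ∧ ¬α) ∈ I_n and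
v_w(α¹) = t^n_{k−1}. -/
def RestrCnD (n : ℕ) {W : Type} (v : W → Form → SVn n) : Prop :=
  (∀ (w : W) (α : Form) (h0 : 0 < n),
      v w α = SVn.t ⟨0, h0⟩ → v w (α.and α.neg) = SVn.T) ∧
  (∀ (w : W) (α : Form) (k : ℕ) (hk : k < n), 1 ≤ k → v w α = SVn.t ⟨k, hk⟩ →
      (v w (α.and α.neg)).incons ∧ v w (α.pow 1) = SVn.t ⟨k - 1, by omega⟩)

/-- A swap Kripke model for C_nᴰ: a pre-model satisfying the restrictions (i), (ii)
and (iii): v_w(α) ∈ Boo_n implies v_w(Oα) ∈ Boo_n. -/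
structure IsModelCnD (n : ℕ) {W : Type} (R : W → W → Prop)
    (v : W → Form → SVn n) : Prop where
  pre : IsPreModelCnD n R v
  restr : RestrCnD n v
  booObl : ∀ w α, (v w α).boo → (v w α.obl).boo

/-- Theorems of the Hilbert calculus C_nᴰ: CPL⁺ axioms, (EM), (cf), (bc_n), (P_n),
(O-K), (D_n), (PO_n), with rules Modus Ponens and O-necessitation. -/
inductive ThmCnD (n : ℕ) : Form → Prop
  | A1 (α β : Form) : ThmCnD n (α.imp (β.imp α))
  | A2 (α β γ : Form) : ThmCnD n ((α.imp (β.imp γ)).imp ((α.imp β).imp (α.imp γ)))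
  | A3 (α β : Form) : ThmCnD n (α.imp (β.imp (α.and β)))
  | A4 (α β : Form) : ThmCnD n ((α.and β).imp α)
  | A5 (α β : Form) : ThmCnD n ((α.and β).imp β)
  | A6 (α β : Form) : ThmCnD n (α.imp (α.or β))
  | A7 (α β : Form) : ThmCnD n (β.imp (α.or β))
  | A8 (α β γ : Form) : ThmCnD n ((α.imp γ).imp ((β.imp γ).imp ((α.or β).imp γ)))
  | A9 (α β : Form) : ThmCnD n (((α.imp β).imp α).imp α)
  | EM (α : Form) : ThmCnD n (α.or α.neg)
  | cf (α : Form) : ThmCnD n (α.neg.neg.imp α)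
  | bcn (α β : Form) : ThmCnD n ((α.bigPow n).imp (α.imp (α.neg.imp β)))
  | Pn (α β : Form) : ThmCnD n (((α.bigPow n).and (β.bigPow n)).imp
      (((α.imp β).bigPow n).and (((α.or β).bigPow n).and ((α.and β).bigPow n))))
  | OK (α β : Form) : ThmCnD n ((α.imp β).obl.imp (α.obl.imp β.obl))
  | Dn (α : Form) : ThmCnD n (α.obl.imp (Form.snn n ((Form.snn n α).obl)))
  | POn (α : Form) : ThmCnD n ((α.bigPow n).imp (α.obl.bigPow n))
  | mp {α β : Form} : ThmCnD n (α.imp β) → ThmCnD n α → ThmCnD n β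
  | nec {α : Form} : ThmCnD n α → ThmCnD n α.obl

/-- conj γ [γ₂,…,γ_k] = γ ∧ γ₂ ∧ … ∧ γ_k -/
def conj (γ : Form) : List Form → Form
  | [] => γ
  | δ :: l => γ.and (conj δ l)

/-- Γ ⊢_{C_nᴰ} φ iff ⊢ φ or ⊢ (γ₁ ∧ … ∧ γ_k) → φ for some γ₁,…,γ_k ∈ Γ, k ≥ 1. -/
def DerivCnD (n : ℕ) (Γ : Set Form) (φ : Form) : Prop :=
  ThmCnD n φ ∨ ∃ (γ : Form) (l : List Form),
    (∀ δ ∈ γ :: l, δ ∈ Γ) ∧ ThmCnD n ((conj γ l).imp φ)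

/-- Γ ⊨_{C_nᴰ} φ : semantic consequence over all swap Kripke models for C_nᴰ. -/
def SemCnD (n : ℕ) (Γ : Set Form) (φ : Form) : Prop :=
  ∀ (W : Type) (R : W → W → Prop) (v : W → Form → SVn n), Nonempty W →
    IsModelCnD n R v → ∀ w : W, (∀ γ ∈ Γ, (v w γ).desig) → (v w φ).desig

/-!
The canonical-model argument. Worlds are the φ-saturated sets Δ (Δ ⊬ φ, but Δ ∪ {ψ} ⊢ φ for every
ψ ∉ Δ), which behave like Boolean valuations on ∧, ∨, → and satisfy α ∈ Δ or ¬α ∈ Δ by (EM); Δ sees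
Δ' when every β with Oβ ∈ Δ lies in Δ'. The snapshot of α at Δ is read off from which of α, ¬α,
α¹, …, αⁿ lie in Δ: when both α and ¬α do, (bc_n) forces some αᵏ⁺¹ ∉ Δ, and such a k is unique
because αʲ ∉ Δ makes αʲ classical in Δ, so all higher powers lie in Δ. (P_n) and (PO_n) make the
Boolean snapshots closed under the connectives and under O, and (D_n) makes the frame serial.
-/

theorem Form.pow_pow (α : Form) (i : ℕ) : ∀ k, (α.pow i).pow k = α.pow (i + k)
  | 0 => rfl
  | k + 1 => by rw [Form.pow, Form.pow_pow α i k]; rfl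

theorem Form.bigPow_succ (α : Form) {m : ℕ} (hm : 1 ≤ m) :
    α.bigPow (m + 1) = (α.bigPow m).and (α.pow (m + 1)) := by
  obtain ⟨m, rfl⟩ := Nat.exists_eq_add_of_le' hm
  rfl

theorem boolImp_eq_true {a b : Bool} : boolImp a b = true ↔ (a = true → b = true) := by
  cases a <;> simp [boolImp]

namespace SVn

variable {n : ℕ}

theorem p1_T : (T : SVn n).p1 = true := rfl
theorem p1_F : (F : SVn n).p1 = false := rfl
theorem p1_t (i : Fin n) : (t i).p1 = true := by simp [p1, coord]

theorem p2_T (hn : 1 ≤ n) : (T : SVn n).p2 = false := by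
  obtain ⟨m, rfl⟩ := Nat.exists_eq_add_of_le' hn
  simp [p2, coord]

theorem p2_F (hn : 1 ≤ n) : (F : SVn n).p2 = true := by
  obtain ⟨m, rfl⟩ := Nat.exists_eq_add_of_le' hn
  simp [p2, coord]

theorem p2_t (hn : 1 ≤ n) (i : Fin n) : (t i).p2 = true := by
  obtain ⟨m, rfl⟩ := Nat.exists_eq_add_of_le' hn
  simp [p2, coord]

theorem boo_T : (T : SVn n).boo := Or.inl rfl
theorem boo_F : (F : SVn n).boo := Or.inr rfl
theorem not_boo_t (i : Fin n) : ¬ (t i).boo := by rintro (h | h) <;> cases h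

end SVn

namespace CnD

open Form

theorem thm_imp_self {n : ℕ} (α : Form) : ThmCnD n (α.imp α) :=
  ((ThmCnD.A2 α (α.imp α) α).mp (ThmCnD.A1 α (α.imp α))).mp (ThmCnD.A1 α α)

/-- O-necessitation enters only through `ThmCnD`, so hypotheses are never necessitated. -/
inductive Deriv (n : ℕ) (Γ : Set Form) : Form → Prop
  | hyp {φ : Form} : φ ∈ Γ → Deriv n Γ φ
  | thm {φ : Form} : ThmCnD n φ → Deriv n Γ φ
  | mp {φ ψ : Form} : Deriv n Γ (φ.imp ψ) → Deriv n Γ φ → Deriv n Γ ψ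

namespace Deriv

variable {n : ℕ} {Γ Δ : Set Form} {φ χ : Form}

theorem mono (h : Deriv n Γ φ) (hΓΔ : Γ ⊆ Δ) : Deriv n Δ φ := by
  induction h with
  | hyp hφ => exact hyp (hΓΔ hφ)
  | thm hφ => exact thm hφ
  | mp _ _ ih₁ ih₂ => exact mp ih₁ ih₂

theorem trans (h : Deriv n Γ φ) (hΓ : ∀ ψ ∈ Γ, Deriv n Δ ψ) : Deriv n Δ φ := by
  induction h with
  | hyp hφ => exact hΓ _ hφ
  | thm hφ => exact thm hφ
  | mp _ _ ih₁ ih₂ => exact mp ih₁ ih₂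

theorem imp_intro (h : Deriv n (insert χ Γ) φ) : Deriv n Γ (χ.imp φ) := by
  induction h with
  | hyp hφ =>
    rcases hφ with rfl | hφ
    · exact thm (thm_imp_self _)
    · exact mp (thm (ThmCnD.A1 _ _)) (hyp hφ)
  | thm hφ => exact mp (thm (ThmCnD.A1 _ _)) (thm hφ)
  | mp _ _ ih₁ ih₂ => exact mp (mp (thm (ThmCnD.A2 _ _ _)) ih₁) ih₂

theorem thmCnD (h : Deriv n ∅ φ) : ThmCnD n φ := by
  induction h with
  | hyp hφ => exact absurd hφ (Set.notMem_empty _)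
  | thm hφ => exact hφ
  | mp _ _ ih₁ ih₂ => exact ih₁.mp ih₂

theorem obl (h : Deriv n Γ φ) : Deriv n (Form.obl '' Γ) φ.obl := by
  induction h with
  | hyp hφ => exact hyp (Set.mem_image_of_mem _ hφ)
  | thm hφ => exact thm hφ.nec
  | mp _ _ ih₁ ih₂ => exact mp (mp (thm (ThmCnD.OK _ _)) ih₁) ih₂

theorem or_elim {α β : Form} (h₁ : Deriv n Γ (α.imp φ)) (h₂ : Deriv n Γ (β.imp φ))
    (h : Deriv n Γ (α.or β)) : Deriv n Γ φ :=
  mp (mp (mp (thm (ThmCnD.A8 α β φ)) h₁) h₂) h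

/-- Case split on α, with α → β playing the role of ¬α; it rests on Peirce's law (A9). -/
theorem of_imp_of_imp_imp {α β : Form} (h₁ : Deriv n Γ (α.imp φ))
    (h₂ : Deriv n Γ ((α.imp β).imp φ)) : Deriv n Γ φ := by
  have hαβ : Deriv n (insert (φ.imp β) Γ) (α.imp β) :=
    imp_intro (mp (hyp (by simp))
      (mp (h₁.mono ((Set.subset_insert _ _).trans (Set.subset_insert _ _))) (hyp (by simp))))
  have hφβφ : Deriv n Γ ((φ.imp β).imp φ) :=
    imp_intro (mp (h₂.mono (Set.subset_insert _ _)) hαβ)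
  exact mp (thm (ThmCnD.A9 φ β)) hφβφ

theorem exists_mem_of_isChain {c : Set (Set Form)} (hc : IsChain (· ⊆ ·) c) (hne : c.Nonempty)
    (h : Deriv n (⋃₀ c) φ) : ∃ Γ ∈ c, Deriv n Γ φ := by
  induction h with
  | hyp hφ =>
    obtain ⟨Γ, hΓ, hφΓ⟩ := Set.mem_sUnion.mp hφ
    exact ⟨Γ, hΓ, hyp hφΓ⟩
  | thm hφ => exact ⟨hne.some, hne.some_mem, thm hφ⟩
  | mp _ _ ih₁ ih₂ =>
    obtain ⟨Γ₁, hΓ₁, h₁⟩ := ih₁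
    obtain ⟨Γ₂, hΓ₂, h₂⟩ := ih₂
    rcases hc.total hΓ₁ hΓ₂ with h₁₂ | h₂₁
    · exact ⟨Γ₂, hΓ₂, mp (h₁.mono h₁₂) h₂⟩
    · exact ⟨Γ₁, hΓ₁, mp h₁ (h₂.mono h₂₁)⟩

theorem exists_list (h : Deriv n Γ φ) :
    ∃ L : List Form, (∀ δ ∈ L, δ ∈ Γ) ∧ Deriv n {δ | δ ∈ L} φ := by
  induction h with
  | @hyp φ hφ => exact ⟨[φ], by simpa using hφ, hyp (by simp)⟩
  | thm hφ => exact ⟨[], by simp, thm hφ⟩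
  | mp _ _ ih₁ ih₂ =>
    obtain ⟨L₁, hL₁, h₁⟩ := ih₁
    obtain ⟨L₂, hL₂, h₂⟩ := ih₂
    refine ⟨L₁ ++ L₂, fun δ hδ => ?_, mp (h₁.mono fun δ hδ => ?_) (h₂.mono fun δ hδ => ?_)⟩
    · rcases List.mem_append.mp hδ with hδ | hδ
      exacts [hL₁ δ hδ, hL₂ δ hδ]
    all_goals simp_all

theorem conj_of_mem {γ : Form} : ∀ {l : List Form}, (∀ δ ∈ γ :: l, δ ∈ Γ) → Deriv n Γ (conj γ l)
  | [], hl => hyp (hl γ (by simp))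
  | δ :: l, hl =>
    mp (mp (thm (ThmCnD.A3 _ _)) (hyp (hl γ (by simp))))
      (conj_of_mem fun ε hε => hl ε (List.mem_cons_of_mem _ hε))

theorem of_mem_conj {γ δ : Form} : ∀ {l : List Form}, δ ∈ γ :: l → Deriv n {conj γ l} δ
  | [], hδ => by rw [List.mem_singleton.mp hδ]; exact hyp rfl
  | ε :: l, hδ => by
    rcases List.mem_cons.mp hδ with rfl | hδ
    · exact mp (thm (ThmCnD.A4 _ _)) (hyp rfl)
    · exact (of_mem_conj hδ).trans fun _ h => by
        rw [Set.mem_singleton_iff.mp h]; exact mp (thm (ThmCnD.A5 _ _)) (hyp rfl)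

end Deriv

theorem derivCnD_iff_deriv {n : ℕ} {Γ : Set Form} {φ : Form} : DerivCnD n Γ φ ↔ Deriv n Γ φ := by
  constructor
  · rintro (h | ⟨γ, l, hl, h⟩)
    · exact Deriv.thm h
    · exact Deriv.mp (Deriv.thm h) (Deriv.conj_of_mem hl)
  · intro h
    obtain ⟨L, hL, hφ⟩ := h.exists_list
    cases L with
    | nil => exact Or.inl (Deriv.thmCnD (by simpa using hφ))
    | cons γ l =>
      refine Or.inr ⟨γ, l, hL, Deriv.thmCnD (Deriv.imp_intro ?_)⟩
      exact hφ.trans fun δ hδ => (Deriv.of_mem_conj hδ).mono (by simp)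

structure IsSaturated (n : ℕ) (φ : Form) (Δ : Set Form) : Prop where
  not_deriv : ¬ Deriv n Δ φ
  deriv_insert : ∀ ψ ∉ Δ, Deriv n (insert ψ Δ) φ

theorem exists_saturated {n : ℕ} {Γ : Set Form} {φ : Form} (h : ¬ Deriv n Γ φ) :
    ∃ Δ, Γ ⊆ Δ ∧ IsSaturated n φ Δ := by
  let S : Set (Set Form) := {Δ | Γ ⊆ Δ ∧ ¬ Deriv n Δ φ}
  have hS : ∀ c ⊆ S, IsChain (· ⊆ ·) c → c.Nonempty → ∃ ub ∈ S, ∀ Δ ∈ c, Δ ⊆ ub := by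
    intro c hcS hc hne
    refine ⟨⋃₀ c, ⟨(hcS hne.some_mem).1.trans (Set.subset_sUnion_of_mem hne.some_mem), ?_⟩,
      fun Δ => Set.subset_sUnion_of_mem⟩
    intro hφ
    obtain ⟨Δ, hΔ, hφΔ⟩ := hφ.exists_mem_of_isChain hc hne
    exact (hcS hΔ).2 hφΔ
  obtain ⟨Δ, hΓΔ, hmax⟩ := zorn_subset_nonempty S hS Γ ⟨subset_rfl, h⟩
  refine ⟨Δ, hΓΔ, hmax.1.2, fun ψ hψ => ?_⟩
  by_contra hψφ
  exact hψ (hmax.2 ⟨hΓΔ.trans (Set.subset_insert ψ Δ), hψφ⟩ (Set.subset_insert ψ Δ)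
    (Set.mem_insert ψ Δ))

namespace IsSaturated

variable {n : ℕ} {φ : Form} {Δ : Set Form} {α β : Form}

theorem mem_of_deriv (hΔ : IsSaturated n φ Δ) (h : Deriv n Δ α) : α ∈ Δ := by
  by_contra hα
  exact hΔ.not_deriv (Deriv.mp (Deriv.imp_intro (hΔ.deriv_insert α hα)) h)

theorem not_mem (hΔ : IsSaturated n φ Δ) : φ ∉ Δ := fun h => hΔ.not_deriv (Deriv.hyp h)

theorem mem_of_thm (hΔ : IsSaturated n φ Δ) (h : ThmCnD n α) : α ∈ Δ :=
  hΔ.mem_of_deriv (Deriv.thm h)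

theorem mem_of_imp_mem (hΔ : IsSaturated n φ Δ) (h : α.imp β ∈ Δ) (hα : α ∈ Δ) : β ∈ Δ :=
  hΔ.mem_of_deriv (Deriv.mp (Deriv.hyp h) (Deriv.hyp hα))

theorem mem_of_thm_imp (hΔ : IsSaturated n φ Δ) (h : ThmCnD n (α.imp β)) (hα : α ∈ Δ) : β ∈ Δ :=
  hΔ.mem_of_imp_mem (hΔ.mem_of_thm h) hα

theorem and_mem_iff (hΔ : IsSaturated n φ Δ) : α.and β ∈ Δ ↔ α ∈ Δ ∧ β ∈ Δ :=
  ⟨fun h => ⟨hΔ.mem_of_thm_imp (ThmCnD.A4 α β) h, hΔ.mem_of_thm_imp (ThmCnD.A5 α β) h⟩,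
    fun ⟨hα, hβ⟩ => hΔ.mem_of_imp_mem (hΔ.mem_of_thm_imp (ThmCnD.A3 α β) hα) hβ⟩

theorem or_mem_iff (hΔ : IsSaturated n φ Δ) : α.or β ∈ Δ ↔ α ∈ Δ ∨ β ∈ Δ := by
  refine ⟨fun h => ?_, ?_⟩
  · by_contra! hαβ
    exact hΔ.not_deriv (Deriv.or_elim (Deriv.imp_intro (hΔ.deriv_insert α hαβ.1))
      (Deriv.imp_intro (hΔ.deriv_insert β hαβ.2)) (Deriv.hyp h))
  · rintro (hα | hβ)
    exacts [hΔ.mem_of_thm_imp (ThmCnD.A6 α β) hα, hΔ.mem_of_thm_imp (ThmCnD.A7 α β) hβ]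

theorem imp_mem_iff (hΔ : IsSaturated n φ Δ) : α.imp β ∈ Δ ↔ (α ∈ Δ → β ∈ Δ) := by
  refine ⟨hΔ.mem_of_imp_mem, fun h => ?_⟩
  by_cases hα : α ∈ Δ
  · exact hΔ.mem_of_thm_imp (ThmCnD.A1 β α) (h hα)
  · by_contra hαβ
    exact hΔ.not_deriv (Deriv.of_imp_of_imp_imp (Deriv.imp_intro (hΔ.deriv_insert α hα))
      (Deriv.imp_intro (hΔ.deriv_insert _ hαβ)))

theorem neg_mem_of_not_mem (hΔ : IsSaturated n φ Δ) (h : α ∉ Δ) : α.neg ∈ Δ :=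
  ((hΔ.or_mem_iff).mp (hΔ.mem_of_thm (ThmCnD.EM α))).resolve_left h

theorem mem_of_neg_neg_mem (hΔ : IsSaturated n φ Δ) (h : α.neg.neg ∈ Δ) : α ∈ Δ :=
  hΔ.mem_of_thm_imp (ThmCnD.cf α) h

theorem bigPow_not_mem (hΔ : IsSaturated n φ Δ) (hα : α ∈ Δ) (hnα : α.neg ∈ Δ) :
    α.bigPow n ∉ Δ := fun h =>
  hΔ.not_mem (hΔ.mem_of_imp_mem (hΔ.mem_of_imp_mem (hΔ.mem_of_thm_imp (ThmCnD.bcn α φ) h) hα) hnα)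

theorem bigPow_mem_iff (hΔ : IsSaturated n φ Δ) {m : ℕ} (hm : 1 ≤ m) :
    α.bigPow m ∈ Δ ↔ ∀ k < m, α.pow (k + 1) ∈ Δ := by
  induction m, hm using Nat.le_induction with
  | base => simp [Form.bigPow]
  | succ m hm ih =>
    rw [Form.bigPow_succ α hm, hΔ.and_mem_iff, ih, Nat.forall_lt_succ_right]

theorem pow_and_neg_not_mem (hΔ : IsSaturated n φ Δ) (h : α.and α.neg ∉ Δ) :
    ∀ k, (α.pow k).and (α.pow k).neg ∉ Δ
  | 0 => h
  | k + 1 => fun hk => by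
    have hneg : (α.pow (k + 1)).neg ∈ Δ := (hΔ.and_mem_iff.mp hk).2
    exact hΔ.pow_and_neg_not_mem h k (hΔ.mem_of_neg_neg_mem hneg)

theorem pow_succ_mem (hΔ : IsSaturated n φ Δ) (h : α.and α.neg ∉ Δ) (k : ℕ) :
    α.pow (k + 1) ∈ Δ :=
  hΔ.neg_mem_of_not_mem (hΔ.pow_and_neg_not_mem h k)

theorem bigPow_mem (hΔ : IsSaturated n φ Δ) (hn : 1 ≤ n) (h : α.and α.neg ∉ Δ) :
    α.bigPow n ∈ Δ :=
  (hΔ.bigPow_mem_iff hn).mpr fun k _ => hΔ.pow_succ_mem h k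

theorem pow_succ_mem_of_lt (hΔ : IsSaturated n φ Δ) {i j : ℕ} (hi : α.pow (i + 1) ∉ Δ)
    (hij : i < j) : α.pow (j + 1) ∈ Δ := by
  have h : (α.pow (i + 1)).and (α.pow (i + 1)).neg ∉ Δ := fun h => hi (hΔ.and_mem_iff.mp h).1
  have := hΔ.pow_succ_mem h (j - i - 1)
  rwa [Form.pow_pow, show i + 1 + (j - i - 1 + 1) = j + 1 by omega] at this

theorem pow_succ_mem_of_ne (hΔ : IsSaturated n φ Δ) {i j : ℕ} (hi : α.pow (i + 1) ∉ Δ)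
    (hij : j ≠ i) : α.pow (j + 1) ∈ Δ := by
  rcases lt_or_gt_of_ne hij with hji | hij
  · by_contra hj
    exact hi (hΔ.pow_succ_mem_of_lt hj hji)
  · exact hΔ.pow_succ_mem_of_lt hi hij

theorem exists_pow_succ_not_mem (hΔ : IsSaturated n φ Δ) (hn : 1 ≤ n) (hα : α ∈ Δ)
    (hnα : α.neg ∈ Δ) : ∃ k < n, α.pow (k + 1) ∉ Δ := by
  by_contra! h
  exact hΔ.bigPow_not_mem hα hnα ((hΔ.bigPow_mem_iff hn).mpr h)

theorem bigPow_imp_or_and_mem (hΔ : IsSaturated n φ Δ) (hα : α.bigPow n ∈ Δ)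
    (hβ : β.bigPow n ∈ Δ) :
    (α.imp β).bigPow n ∈ Δ ∧ (α.or β).bigPow n ∈ Δ ∧ (α.and β).bigPow n ∈ Δ := by
  have h := hΔ.mem_of_thm_imp (ThmCnD.Pn α β) (hΔ.and_mem_iff.mpr ⟨hα, hβ⟩)
  rwa [hΔ.and_mem_iff, hΔ.and_mem_iff] at h

theorem obl_mem_of_deriv (hΔ : IsSaturated n φ Δ) (h : Deriv n {β | β.obl ∈ Δ} α) :
    α.obl ∈ Δ :=
  hΔ.mem_of_deriv (h.obl.mono (by rintro _ ⟨β, hβ, rfl⟩; exact hβ))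

/-- By (D_n), Oγ and O(∼⁽ⁿ⁾γ) cannot both lie in Δ. -/
theorem exists_not_deriv_obl (hΔ : IsSaturated n φ Δ) : ∃ ψ, ¬ Deriv n {β | β.obl ∈ Δ} ψ := by
  by_contra! h
  let γ := Form.var 0
  have hγ := hΔ.mem_of_thm_imp (ThmCnD.Dn γ) (hΔ.obl_mem_of_deriv (h γ))
  obtain ⟨hneg, hbig⟩ := hΔ.and_mem_iff.mp hγ
  exact hΔ.bigPow_not_mem (hΔ.obl_mem_of_deriv (h _)) hneg hbig

end IsSaturated

open SVn

open scoped Classical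

section canonicalVal

/-- When α, ¬α ∈ Δ the snapshot is t_k for the least (for saturated Δ, the only) k with αᵏ⁺¹ ∉ Δ;
the last branch is junk, never taken for saturated Δ. -/
noncomputable def canonicalVal (n : ℕ) (Δ : Set Form) (α : Form) : SVn n :=
  if α ∉ Δ then F
  else if α.neg ∉ Δ then T
  else if h : ∃ k, k < n ∧ α.pow (k + 1) ∉ Δ then t ⟨Nat.find h, (Nat.find_spec h).1⟩
  else F

variable {n : ℕ} {φ : Form} {Δ : Set Form} {α : Form}

theorem canonicalVal_of_not_mem (h : α ∉ Δ) : canonicalVal n Δ α = F := if_pos h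

theorem canonicalVal_of_neg_not_mem (hα : α ∈ Δ) (hnα : α.neg ∉ Δ) : canonicalVal n Δ α = T := by
  rw [canonicalVal, if_neg (not_not_intro hα), if_pos hnα]

theorem canonicalVal_eq_t (hΔ : IsSaturated n φ Δ) (hα : α ∈ Δ) (hnα : α.neg ∈ Δ) {k : ℕ}
    (hk : k < n) (hpow : α.pow (k + 1) ∉ Δ) : canonicalVal n Δ α = t ⟨k, hk⟩ := by
  have h : ∃ k, k < n ∧ α.pow (k + 1) ∉ Δ := ⟨k, hk, hpow⟩
  have hfind : Nat.find h = k :=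
    (Nat.find_eq_iff h).mpr ⟨⟨hk, hpow⟩, fun j hj ⟨_, hj'⟩ => hj' (hΔ.pow_succ_mem_of_ne hpow hj.ne)⟩
  rw [canonicalVal, if_neg (not_not_intro hα), if_neg (not_not_intro hnα), dif_pos h]
  simp only [hfind]

theorem exists_canonicalVal_eq_t (hΔ : IsSaturated n φ Δ) (hn : 1 ≤ n) (hα : α ∈ Δ)
    (hnα : α.neg ∈ Δ) : ∃ i, canonicalVal n Δ α = t i := by
  obtain ⟨k, hk, hpow⟩ := hΔ.exists_pow_succ_not_mem hn hα hnα
  exact ⟨_, canonicalVal_eq_t hΔ hα hnα hk hpow⟩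

theorem mem_of_canonicalVal_eq_t {k : ℕ} {hk : k < n} (h : canonicalVal n Δ α = t ⟨k, hk⟩) :
    α ∈ Δ ∧ α.neg ∈ Δ ∧ α.pow (k + 1) ∉ Δ := by
  unfold canonicalVal at h
  split_ifs at h with hα hnα hex
  simp only [t.injEq, Fin.mk.injEq] at h
  exact ⟨hα, hnα, h ▸ (Nat.find_spec hex).2⟩

theorem p1_canonicalVal (hΔ : IsSaturated n φ Δ) (hn : 1 ≤ n) :
    (canonicalVal n Δ α).p1 = decide (α ∈ Δ) := by
  by_cases hα : α ∈ Δ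
  · by_cases hnα : α.neg ∈ Δ
    · obtain ⟨i, hi⟩ := exists_canonicalVal_eq_t hΔ hn hα hnα
      simp [hi, p1_t, hα]
    · simp [canonicalVal_of_neg_not_mem hα hnα, p1_T, hα]
  · simp [canonicalVal_of_not_mem hα, p1_F, hα]

theorem desig_canonicalVal_iff (hΔ : IsSaturated n φ Δ) (hn : 1 ≤ n) :
    (canonicalVal n Δ α).desig ↔ α ∈ Δ := by
  simp [desig, p1_canonicalVal hΔ hn]

theorem p2_canonicalVal (hΔ : IsSaturated n φ Δ) (hn : 1 ≤ n) :
    (canonicalVal n Δ α).p2 = decide (α.neg ∈ Δ) := by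
  by_cases hα : α ∈ Δ
  · by_cases hnα : α.neg ∈ Δ
    · obtain ⟨i, hi⟩ := exists_canonicalVal_eq_t hΔ hn hα hnα
      simp [hi, p2_t hn, hnα]
    · simp [canonicalVal_of_neg_not_mem hα hnα, p2_T hn, hnα]
  · simp [canonicalVal_of_not_mem hα, p2_F hn, hΔ.neg_mem_of_not_mem hα]

theorem boo_canonicalVal_iff (hΔ : IsSaturated n φ Δ) (hn : 1 ≤ n) :
    (canonicalVal n Δ α).boo ↔ α.bigPow n ∈ Δ := by
  by_cases hα : α ∈ Δ
  · by_cases hnα : α.neg ∈ Δ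
    · obtain ⟨i, hi⟩ := exists_canonicalVal_eq_t hΔ hn hα hnα
      simp only [hi, not_boo_t, false_iff]
      exact hΔ.bigPow_not_mem hα hnα
    · simp only [canonicalVal_of_neg_not_mem hα hnα, boo_T, true_iff]
      exact hΔ.bigPow_mem hn fun h => hnα (hΔ.and_mem_iff.mp h).2
  · simp only [canonicalVal_of_not_mem hα, boo_F, true_iff]
    exact hΔ.bigPow_mem hn fun h => hα (hΔ.and_mem_iff.mp h).1

theorem opCond_canonicalVal (hΔ : IsSaturated n φ Δ) (hn : 1 ≤ n) {op : Bool → Bool → Bool}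
    {α β γ : Form} (hmem : γ ∈ Δ ↔ op (decide (α ∈ Δ)) (decide (β ∈ Δ)) = true)
    (hbig : α.bigPow n ∈ Δ → β.bigPow n ∈ Δ → γ.bigPow n ∈ Δ) :
    opCond op (canonicalVal n Δ γ) (canonicalVal n Δ α) (canonicalVal n Δ β) := by
  refine ⟨?_, ?_⟩
  · rw [p1_canonicalVal hΔ hn, p1_canonicalVal hΔ hn, p1_canonicalVal hΔ hn, Bool.eq_iff_iff,
      decide_eq_true_iff, hmem]
  · simpa only [boo_canonicalVal_iff hΔ hn] using hbig

theorem canonicalVal_and_neg_of_eq_t_zero (hΔ : IsSaturated n φ Δ) (hn : 0 < n)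
    (h : canonicalVal n Δ α = t ⟨0, hn⟩) : canonicalVal n Δ (α.and α.neg) = T := by
  obtain ⟨hα, hnα, hpow⟩ := mem_of_canonicalVal_eq_t h
  exact canonicalVal_of_neg_not_mem (hΔ.and_mem_iff.mpr ⟨hα, hnα⟩) hpow

/-- Since αᵏ⁺¹ = (α¹)ᵏ, the power of α¹ missing from Δ comes one step earlier than that of α. -/
theorem canonicalVal_of_eq_t_pos (hΔ : IsSaturated n φ Δ) {k : ℕ} (hk : k < n) (hk1 : 1 ≤ k)
    (h : canonicalVal n Δ α = t ⟨k, hk⟩) :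
    (canonicalVal n Δ (α.and α.neg)).incons ∧
      canonicalVal n Δ (α.pow 1) = t ⟨k - 1, by omega⟩ := by
  obtain ⟨hα, hnα, hpow⟩ := mem_of_canonicalVal_eq_t h
  have hpow1 : α.pow 1 ∈ Δ := hΔ.pow_succ_mem_of_ne hpow (j := 0) (by omega)
  have hpow' : (α.pow 1).pow (k - 1 + 1) ∉ Δ := by
    rwa [Form.pow_pow, show 1 + (k - 1 + 1) = k + 1 by omega]
  have hnpow1 : (α.pow 1).neg ∈ Δ := by
    by_contra hn1
    exact hpow' (hΔ.pow_succ_mem (fun h => hn1 (hΔ.and_mem_iff.mp h).2) (k - 1))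
  exact ⟨exists_canonicalVal_eq_t hΔ (by omega) (hΔ.and_mem_iff.mpr ⟨hα, hnα⟩) hpow1,
    canonicalVal_eq_t hΔ hpow1 hnpow1 _ hpow'⟩

end canonicalVal

abbrev CanonicalWorld (n : ℕ) : Type := {Δ : Set Form // ∃ φ, IsSaturated n φ Δ}

def canonicalRel {n : ℕ} (w w' : CanonicalWorld n) : Prop := ∀ β : Form, β.obl ∈ w.1 → β ∈ w'.1

theorem canonicalRel_serial {n : ℕ} (w : CanonicalWorld n) : ∃ w', canonicalRel w w' := by
  obtain ⟨Δ, φ, hΔ⟩ := w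
  obtain ⟨ψ, hψ⟩ := hΔ.exists_not_deriv_obl
  obtain ⟨Δ', hsub, hΔ'⟩ := exists_saturated hψ
  exact ⟨⟨Δ', ψ, hΔ'⟩, fun β hβ => hsub hβ⟩

theorem obl_mem_iff_forall_canonicalRel {n : ℕ} {φ : Form} {Δ : Set Form}
    (hΔ : IsSaturated n φ Δ) (α : Form) :
    α.obl ∈ Δ ↔ ∀ w', canonicalRel ⟨Δ, φ, hΔ⟩ w' → α ∈ w'.1 := by
  refine ⟨fun h w' hw' => hw' α h, fun h => ?_⟩
  by_contra hα
  have hnd : ¬ Deriv n {β | β.obl ∈ Δ} α := fun hd => hα (hΔ.obl_mem_of_deriv hd)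
  obtain ⟨Δ', hsub, hΔ'⟩ := exists_saturated hnd
  exact hΔ'.not_mem (h ⟨Δ', α, hΔ'⟩ fun β hβ => hsub hβ)

theorem isModelCnD_canonical {n : ℕ} (hn : 1 ≤ n) :
    IsModelCnD n canonicalRel fun (w : CanonicalWorld n) => canonicalVal n w.1 := by
  refine ⟨⟨canonicalRel_serial, ?_, ?_, ?_, ?_, ?_⟩, ⟨?_, ?_⟩, ?_⟩
  · rintro ⟨Δ, φ, hΔ⟩ α β
    exact opCond_canonicalVal hΔ hn (by simp [hΔ.and_mem_iff])
      fun hα hβ => (hΔ.bigPow_imp_or_and_mem hα hβ).2.2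
  · rintro ⟨Δ, φ, hΔ⟩ α β
    exact opCond_canonicalVal hΔ hn (by simp [hΔ.or_mem_iff])
      fun hα hβ => (hΔ.bigPow_imp_or_and_mem hα hβ).2.1
  · rintro ⟨Δ, φ, hΔ⟩ α β
    exact opCond_canonicalVal hΔ hn (by simp [hΔ.imp_mem_iff, boolImp_eq_true])
      fun hα hβ => (hΔ.bigPow_imp_or_and_mem hα hβ).1
  · rintro ⟨Δ, φ, hΔ⟩ α
    constructor
    · rw [p1_canonicalVal hΔ hn, p2_canonicalVal hΔ hn]
    · rw [p2_canonicalVal hΔ hn, p1_canonicalVal hΔ hn, Bool.le_iff_imp]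
      simpa using hΔ.mem_of_neg_neg_mem
  · rintro ⟨Δ, φ, hΔ⟩ α
    rw [p1_canonicalVal hΔ hn, decide_eq_true_iff, obl_mem_iff_forall_canonicalRel hΔ]
    refine forall_congr' fun ⟨Δ', φ', hΔ'⟩ => ?_
    rw [p1_canonicalVal hΔ' hn, decide_eq_true_iff]
  · rintro ⟨Δ, φ, hΔ⟩ α hn0
    exact canonicalVal_and_neg_of_eq_t_zero hΔ hn0
  · rintro ⟨Δ, φ, hΔ⟩ α k hk hk1
    exact canonicalVal_of_eq_t_pos hΔ hk hk1
  · rintro ⟨Δ, φ, hΔ⟩ α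
    simp only [boo_canonicalVal_iff hΔ hn]
    exact hΔ.mem_of_thm_imp (ThmCnD.POn α)

end CnD

/-- Completeness of C_nᴰ (n ≥ 2) w.r.t. swap Kripke models. -/
theorem CnD_completeness (n : ℕ) (hn : 2 ≤ n) (Γ : Set Form) (φ : Form) :
    SemCnD n Γ φ → DerivCnD n Γ φ := by
  intro hsem
  by_contra hnd
  obtain ⟨Δ, hΓΔ, hΔ⟩ := CnD.exists_saturated (mt CnD.derivCnD_iff_deriv.mpr hnd)
  have hn1 : 1 ≤ n := by omega
  let w : CnD.CanonicalWorld n := ⟨Δ, φ, hΔ⟩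
  have hφ := hsem _ CnD.canonicalRel (fun w => CnD.canonicalVal n w.1) ⟨w⟩
    (CnD.isModelCnD_canonical hn1) w
    fun γ hγ => (CnD.desig_canonicalVal_iff hΔ hn1).mpr (hΓΔ hγ)
  exact hΔ.not_mem ((CnD.desig_canonicalVal_iff hΔ hn1).mp hφ)
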